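/- The Wirtinger derivatives act on the even basis of symplectic monogenics by: ∂_z s_{e,k}^h = h s_{e,k+1}^{h−1} for all integers k with −h ≤ k; ∂_{z̄} s_{e,k}^h = h s_{e,k}^{h−1} for k ≠ −h; and ∂_{z̄} s_{e,−h}^h = 0. In particular ∂_z and ∂_{z̄} preserve the kernel of the symplectic Dirac operator and lower homogeneity in (z, z̄) by one on these elements. -/

import Mathlib

noncomputable section

open Complex Finset

/-- Points `(x, y, q)` of `ℝ³`. -/
abbrev P3 := ℝ × ℝ × ℝ

/-- Partial derivative with respect to `x`. -/
def pdx (f : P3 → ℂ) : P3 → ℂ := fun p => deriv (fun t => f (t, p.2.1, p.2.2)) p.1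

/-- Partial derivative with respect to `y`. -/
def pdy (f : P3 → ℂ) : P3 → ℂ := fun p => deriv (fun t => f (p.1, t, p.2.2)) p.2.1

/-- Partial derivative with respect to `q`. -/
def pdq (f : P3 → ℂ) : P3 → ℂ := fun p => deriv (fun t => f (p.1, p.2.1, t)) p.2.2

/-- The symplectic Dirac operator `D_s f = i q ∂_y f − ∂_x ∂_q f`. -/
def Ds (f : P3 → ℂ) : P3 → ℂ := fun p =>
  Complex.I * (p.2.2 : ℂ) * pdy f p - pdx (pdq f) p

/-- The operator `X_s f = y ∂_q f + i x q f`. -/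
def Xs (f : P3 → ℂ) : P3 → ℂ := fun p =>
  (p.2.1 : ℂ) * pdq f p + Complex.I * (p.1 : ℂ) * (p.2.2 : ℂ) * f p

/-- The Euler operator `E f = x ∂_x f + y ∂_y f`. -/
def Eul (f : P3 → ℂ) : P3 → ℂ := fun p =>
  (p.1 : ℂ) * pdx f p + (p.2.1 : ℂ) * pdy f p

/-- The complex coordinate `z = x + iy`. -/
def zc (r : P3) : ℂ := (r.1 : ℂ) + Complex.I * (r.2.1 : ℂ)

/-- The complex coordinate `z̄ = x − iy`. -/
def zbc (r : P3) : ℂ := (r.1 : ℂ) - Complex.I * (r.2.1 : ℂ)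

/-- The Wirtinger derivative `∂_z = (∂_x − i ∂_y)/2`. -/
def pdz (f : P3 → ℂ) : P3 → ℂ := fun p => (pdx f p - Complex.I * pdy f p) / 2

/-- The Wirtinger derivative `∂_{z̄} = (∂_x + i ∂_y)/2`. -/
def pdzbar (f : P3 → ℂ) : P3 → ℂ := fun p => (pdx f p + Complex.I * pdy f p) / 2

/-- The physicists' Hermite polynomial `H_k(q) = (−1)^k e^{q²} (d/dq)^k e^{−q²}`. -/
def hermiteP (k : ℕ) (q : ℝ) : ℝ :=
  (-1 : ℝ) ^ k * Real.exp (q ^ 2) * (deriv^[k] fun t : ℝ => Real.exp (-t ^ 2)) q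

/-- The `k`-th Hermite function `ψ_k(q) = (2^k k! √π)^{−1/2} e^{−q²/2} H_k(q)`. -/
def psiH (k : ℕ) (q : ℝ) : ℝ :=
  (Real.sqrt (2 ^ k * (Nat.factorial k : ℝ) * Real.sqrt Real.pi))⁻¹ *
    Real.exp (-q ^ 2 / 2) * hermiteP k q

/-- The double factorial `m!!` of an integer, with the convention `m!! = 1` for `m ≤ 0`
(in particular `(−1)!! = 1`). -/
def dfac (m : ℤ) : ℝ := if m ≤ 0 then 1 else (Nat.doubleFactorial m.toNat : ℝ)

/-- The even basis element
`s_{e,k}^h = Σ_p √((2k+2p−1)!!/(2k+2p)!!) binom(h,p) ψ_{2k+2p}(q) z̄^{h−p} z^p`, where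
the sum runs over `max(0, −k) ≤ p ≤ h` (i.e. over `0 ≤ p ≤ h` if `k ≥ 0`, and over
`|k| ≤ p ≤ h` if `−h ≤ k ≤ −1`). -/
def sE (h : ℕ) (k : ℤ) : P3 → ℂ := fun r =>
  ∑ p ∈ Finset.Icc (-k).toNat h,
    (Real.sqrt (dfac (2 * k + 2 * (p : ℤ) - 1) / dfac (2 * k + 2 * (p : ℤ))) : ℂ) *
      (h.choose p : ℂ) * (psiH (2 * k + 2 * (p : ℤ)).toNat r.2.2 : ℂ) *
        (zbc r) ^ (h - p) * (zc r) ^ p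

/-- The odd basis element
`s_{o,k}^h = Σ_{p=0}^h √((2k+2p)!!/(2k+2p+1)!!) binom(h,p) ψ_{2k+2p+1}(q) z̄^{h−p} z^p`. -/
def sO (h k : ℕ) : P3 → ℂ := fun r =>
  ∑ p ∈ Finset.range (h + 1),
    (Real.sqrt ((Nat.doubleFactorial (2 * k + 2 * p) : ℝ) /
        (Nat.doubleFactorial (2 * k + 2 * p + 1) : ℝ)) : ℂ) *
      (h.choose p : ℂ) * (psiH (2 * k + 2 * p + 1) r.2.2 : ℂ) *
        (zbc r) ^ (h - p) * (zc r) ^ p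

/-!
Each `s_{e,k}^h` is a finite sum of monomials `c(q) z̄^a z^b`, on which `∂_z` and `∂_{z̄}` act as
formal partial derivatives, since `∂_z z̄ = 0 = ∂_{z̄} z`. The coefficient of the `p`-th monomial
depends on `k` only through `k + p`, so shifting `p ↦ p + 1` turns `∂_z s_{e,k}^h` into a
multiple of `s_{e,k+1}^{h-1}`; the factor `h` comes from `(p + 1) C(h, p + 1) = h C(h - 1, p)`
and `(h - p) C(h, p) = h C(h - 1, p)`.
-/

lemma hasDerivAt_zc_fst (x y q : ℝ) : HasDerivAt (fun t : ℝ => zc (t, y, q)) 1 x :=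
  ((hasDerivAt_id (x : ℂ)).add_const (I * y)).comp_ofReal

lemma hasDerivAt_zbc_fst (x y q : ℝ) : HasDerivAt (fun t : ℝ => zbc (t, y, q)) 1 x :=
  ((hasDerivAt_id (x : ℂ)).sub_const (I * y)).comp_ofReal

lemma hasDerivAt_zc_snd (x y q : ℝ) : HasDerivAt (fun t : ℝ => zc (x, t, q)) I y :=
  (((hasDerivAt_id (y : ℂ)).const_mul I).const_add (x : ℂ)).comp_ofReal.congr_deriv
    (mul_one I)

lemma hasDerivAt_zbc_snd (x y q : ℝ) : HasDerivAt (fun t : ℝ => zbc (x, t, q)) (-I) y :=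
  (((hasDerivAt_id (y : ℂ)).const_mul I).const_sub (x : ℂ)).comp_ofReal.congr_deriv
    (by rw [mul_one])

lemma HasDerivAt.sum_mul_pow_mul_pow {ι : Type*} (s : Finset ι) (c : ι → ℂ) (m n : ι → ℕ)
    {f g : ℝ → ℂ} {a b : ℂ} {t : ℝ} (hf : HasDerivAt f a t) (hg : HasDerivAt g b t) :
    HasDerivAt (fun t => ∑ i ∈ s, c i * f t ^ m i * g t ^ n i)
      (a * ∑ i ∈ s, c i * m i * f t ^ (m i - 1) * g t ^ n i
        + b * ∑ i ∈ s, c i * n i * f t ^ m i * g t ^ (n i - 1)) t := by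
  rw [mul_sum, mul_sum, ← sum_add_distrib]
  refine HasDerivAt.fun_sum fun i _ => ?_
  exact (((hf.fun_pow (m i)).const_mul (c i)).fun_mul (hg.fun_pow (n i))).congr_deriv (by ring)

section MonomialSum

variable {ι : Type*} (s : Finset ι) (c : ι → ℝ → ℂ) (m n : ι → ℕ)

def zMonomialSum : P3 → ℂ := fun r => ∑ i ∈ s, c i r.2.2 * zbc r ^ m i * zc r ^ n i

lemma pdx_zMonomialSum (r : P3) :
    pdx (zMonomialSum s c m n) r =
      zMonomialSum s (fun i q => c i q * m i) (fun i => m i - 1) n r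
        + zMonomialSum s (fun i q => c i q * n i) m (fun i => n i - 1) r := by
  obtain ⟨x, y, q⟩ := r
  have hx := HasDerivAt.sum_mul_pow_mul_pow s (fun i => c i q) m n
    (hasDerivAt_zbc_fst x y q) (hasDerivAt_zc_fst x y q)
  rw [one_mul, one_mul] at hx
  exact hx.deriv

lemma pdy_zMonomialSum (r : P3) :
    pdy (zMonomialSum s c m n) r =
      -I * zMonomialSum s (fun i q => c i q * m i) (fun i => m i - 1) n r
        + I * zMonomialSum s (fun i q => c i q * n i) m (fun i => n i - 1) r := by
  obtain ⟨x, y, q⟩ := r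
  exact (HasDerivAt.sum_mul_pow_mul_pow s (fun i => c i q) m n
    (hasDerivAt_zbc_snd x y q) (hasDerivAt_zc_snd x y q)).deriv

theorem pdz_zMonomialSum :
    pdz (zMonomialSum s c m n) = zMonomialSum s (fun i q => c i q * n i) m (fun i => n i - 1) := by
  funext r
  rw [pdz, pdx_zMonomialSum, pdy_zMonomialSum]
  linear_combination
    (zMonomialSum s (fun i q => c i q * m i) (fun i => m i - 1) n r
      - zMonomialSum s (fun i q => c i q * n i) m (fun i => n i - 1) r) / 2 * I_sq

theorem pdzbar_zMonomialSum :
    pdzbar (zMonomialSum s c m n) =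
      zMonomialSum s (fun i q => c i q * m i) (fun i => m i - 1) n := by
  funext r
  rw [pdzbar, pdx_zMonomialSum, pdy_zMonomialSum]
  linear_combination
    (zMonomialSum s (fun i q => c i q * n i) m (fun i => n i - 1) r
      - zMonomialSum s (fun i q => c i q * m i) (fun i => m i - 1) n r) / 2 * I_sq

end MonomialSum

lemma sum_Icc_choose_mul_self (w : ℕ → ℂ) (u v : ℂ) (a h : ℕ) :
    ∑ p ∈ Icc a h, h.choose p * w p * p * u ^ (h - p) * v ^ (p - 1) =
      h * ∑ p ∈ Icc (a - 1) (h - 1), (h - 1).choose p * w (p + 1) * u ^ (h - 1 - p) * v ^ p := by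
  rcases h with _ | m
  · rw [Nat.cast_zero, zero_mul]
    refine sum_eq_zero fun p hp => ?_
    simp [Nat.le_zero.mp (mem_Icc.mp hp).2]
  have hsub : (Icc (a - 1) m).map (addRightEmbedding 1) ⊆ Icc a (m + 1) := by
    rw [map_add_right_Icc]
    intro p
    simp only [mem_Icc]
    omega
  have hvanish : ∀ p ∈ Icc a (m + 1), p ∉ (Icc (a - 1) m).map (addRightEmbedding 1) →
      (m + 1).choose p * w p * p * u ^ (m + 1 - p) * v ^ (p - 1) = 0 := by
    rw [map_add_right_Icc]
    intro p hp hp'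
    simp only [mem_Icc] at hp hp'
    simp [show p = 0 by omega]
  rw [← sum_subset hsub hvanish, sum_map, mul_sum]
  refine sum_congr rfl fun p _ => ?_
  have hchoose := congrArg (Nat.cast : ℕ → ℂ) (Nat.add_one_mul_choose_eq m p)
  push_cast at hchoose
  simp only [addRightEmbedding_apply, Nat.add_sub_cancel, Nat.add_sub_add_right]
  push_cast
  linear_combination (-w (p + 1) * u ^ (m - p) * v ^ p) * hchoose

lemma sum_Icc_choose_mul_sub_self (w : ℕ → ℂ) (u v : ℂ) (a h : ℕ) :
    ∑ p ∈ Icc a h, h.choose p * w p * ((h - p : ℕ) : ℂ) * u ^ (h - p - 1) * v ^ p =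
      h * ∑ p ∈ Icc a (h - 1), (h - 1).choose p * w p * u ^ (h - 1 - p) * v ^ p := by
  rcases h with _ | m
  · rw [Nat.cast_zero, zero_mul]
    refine sum_eq_zero fun p hp => ?_
    simp [Nat.le_zero.mp (mem_Icc.mp hp).2]
  have hsub : Icc a m ⊆ Icc a (m + 1) := Icc_subset_Icc_right m.le_succ
  have hvanish : ∀ p ∈ Icc a (m + 1), p ∉ Icc a m →
      (m + 1).choose p * w p * ((m + 1 - p : ℕ) : ℂ) * u ^ (m + 1 - p - 1) * v ^ p = 0 := by
    intro p hp hp'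
    simp only [mem_Icc] at hp hp'
    simp [show p = m + 1 by omega]
  rw [← sum_subset hsub hvanish, mul_sum, Nat.add_sub_cancel]
  refine sum_congr rfl fun p hp => ?_
  have hchoose := congrArg (Nat.cast : ℕ → ℂ) (Nat.choose_mul_succ_eq m p)
  push_cast at hchoose
  rw [show m + 1 - p - 1 = m - p by omega]
  push_cast
  linear_combination (-w p * u ^ (m - p) * v ^ p) * hchoose

def evenCoeff (j : ℤ) (q : ℝ) : ℂ :=
  (Real.sqrt (dfac (2 * j - 1) / dfac (2 * j)) : ℂ) * (psiH (2 * j).toNat q : ℂ)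

lemma sE_eq_zMonomialSum (h : ℕ) (k : ℤ) :
    sE h k = zMonomialSum (Icc (-k).toNat h) (fun p q => h.choose p * evenCoeff (k + p) q)
      (fun p => h - p) (fun p => p) := by
  funext r
  refine sum_congr rfl fun p _ => ?_
  simp only [evenCoeff, mul_add]
  ring

lemma sE_eq_zero_of_lt {h : ℕ} {k : ℤ} (hk : k < -h) : sE h k = 0 := by
  funext r
  rw [sE, Icc_eq_empty (by omega), sum_empty, Pi.zero_apply]

theorem pdz_sE (h : ℕ) (k : ℤ) (r : P3) : pdz (sE h k) r = h * sE (h - 1) (k + 1) r := by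
  rw [sE_eq_zMonomialSum, sE_eq_zMonomialSum, pdz_zMonomialSum]
  refine (sum_Icc_choose_mul_self (fun p => evenCoeff (k + p) r.2.2) _ _ _ _).trans ?_
  rw [show (-(k + 1)).toNat = (-k).toNat - 1 by omega]
  congr 1
  refine sum_congr rfl fun p _ => ?_
  rw [show k + ((p + 1 : ℕ) : ℤ) = k + 1 + p by push_cast; ring]

theorem pdzbar_sE (h : ℕ) (k : ℤ) (r : P3) : pdzbar (sE h k) r = h * sE (h - 1) k r := by
  rw [sE_eq_zMonomialSum, sE_eq_zMonomialSum, pdzbar_zMonomialSum]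
  exact sum_Icc_choose_mul_sub_self (fun p => evenCoeff (k + p) r.2.2) _ _ _ _

theorem wirtinger_on_even_basis_general (h : ℕ) (k : ℤ) :
    (∀ p, pdz (sE h k) p = (h : ℂ) * sE (h - 1) (k + 1) p) ∧
    (k ≠ -(h : ℤ) → ∀ p, pdzbar (sE h k) p = (h : ℂ) * sE (h - 1) k p) ∧
    (∀ p, pdzbar (sE h (-(h : ℤ))) p = 0) := by
  refine ⟨pdz_sE h k, fun _ => pdzbar_sE h k, fun r => ?_⟩
  rw [pdzbar_sE]
  rcases h with _ | m
  · rw [Nat.cast_zero, zero_mul]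
  · rw [sE_eq_zero_of_lt (by omega), Pi.zero_apply, mul_zero]

/-- The Wirtinger derivatives act on the even basis of symplectic monogenics by
`∂_z s_{e,k}^h = h s_{e,k+1}^{h−1}`, `∂_{z̄} s_{e,k}^h = h s_{e,k}^{h−1}` (for `k ≠ −h`),
and `∂_{z̄} s_{e,−h}^h = 0`; in particular they preserve the kernel of the symplectic
Dirac operator and lower homogeneity by one. -/
theorem wirtinger_on_even_basis (h : ℕ) (k : ℤ) (hk : -(h : ℤ) ≤ k) :
    (∀ p, pdz (sE h k) p = (h : ℂ) * sE (h - 1) (k + 1) p) ∧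
    (k ≠ -(h : ℤ) → ∀ p, pdzbar (sE h k) p = (h : ℂ) * sE (h - 1) k p) ∧
    (∀ p, pdzbar (sE h (-(h : ℤ))) p = 0) :=
  wirtinger_on_even_basis_general h k
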